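/- In the transformed Prisoner's Dilemma with w = b/a, if w < min{w_min, w_max} then (D,D) is the unique pure-strategy Nash equilibrium of the subjective game, and if w > max{w_min, w_max} then (C,C) is the unique pure-strategy Nash equilibrium, where w_min = (T−R)/(R−S) and w_max = (P−S)/(T−P). -/

import Mathlib

/-- Pure strategies in the Prisoner's Dilemma. -/
inductive Strategy : Type
  | C : Strategy
  | D : Strategy
deriving DecidableEq

open Strategy

/-- Objective payoff of the row player when she plays `s` against `t`:
`R` at (C,C), `P` at (D,D), `S` for the cooperator and `T` for the defector
at an asymmetric profile. -/
def payoff (T R P S : ℝ) : Strategy → Strategy → ℝ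
  | C, C => R
  | C, D => S
  | D, C => T
  | D, D => P

/-- Subjective utility of a player who plays `s` against `t`:
`u'_i = a·u_i + b·u_j`. -/
def subj (T R P S a b : ℝ) (s t : Strategy) : ℝ :=
  a * payoff T R P S s t + b * payoff T R P S t s

/-- `(s, t)` is a pure-strategy Nash equilibrium of the subjective game:
no player can strictly increase her subjective utility by a unilateral deviation. -/
def IsNash (T R P S a b : ℝ) (s t : Strategy) : Prop :=
  (∀ s' : Strategy, subj T R P S a b s' t ≤ subj T R P S a b s t) ∧
  (∀ t' : Strategy, subj T R P S a b t' s ≤ subj T R P S a b t s)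

/-
`w < w_min` says exactly that defecting against a cooperator strictly raises subjective
utility, and `w < w_max` says the same against a defector; so below both thresholds D strictly
dominates C, and a strictly dominant strategy is the only one that can occur in a pure Nash
equilibrium. Above both thresholds the inequalities reverse and C strictly dominates D.
-/

/-- `u s t` is the utility of playing `s` against `t`. -/
def StrictlyDominant {α : Type*} (u : α → α → ℝ) (d : α) : Prop :=
  ∀ s t, s ≠ d → u s t < u d t

theorem isNash_iff_of_strictlyDominant {T R P S a b : ℝ} {d : Strategy}
    (hd : StrictlyDominant (subj T R P S a b) d) (s t : Strategy) :
    IsNash T R P S a b s t ↔ s = d ∧ t = d := by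
  have best_response {x y : Strategy} (h : ∀ x', subj T R P S a b x' y ≤ subj T R P S a b x y) :
      x = d := by
    by_contra hx
    exact (hd x y hx).not_ge (h d)
  constructor
  · rintro ⟨hs, ht⟩
    exact ⟨best_response hs, best_response ht⟩
  · rintro ⟨hs, ht⟩
    have dominant (y x : Strategy) : subj T R P S a b x y ≤ subj T R P S a b d y := by
      by_cases hx : x = d
      · rw [hx]
      · exact (hd x y hx).le
    rw [hs, ht]
    exact ⟨dominant d, dominant d⟩

section Thresholds

variable {T R P S a b : ℝ}

theorem subj_C_C_lt_subj_D_C_iff (ha : 0 < a) (hSR : S < R) :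
    subj T R P S a b C C < subj T R P S a b D C ↔ b / a < (T - R) / (R - S) := by
  rw [div_lt_div_iff₀ ha (sub_pos.2 hSR)]
  simp only [subj, payoff]
  constructor <;> intro h <;> linarith

theorem subj_C_D_lt_subj_D_D_iff (ha : 0 < a) (hPT : P < T) :
    subj T R P S a b C D < subj T R P S a b D D ↔ b / a < (P - S) / (T - P) := by
  rw [div_lt_div_iff₀ ha (sub_pos.2 hPT)]
  simp only [subj, payoff]
  constructor <;> intro h <;> linarith

theorem subj_D_C_lt_subj_C_C_iff (ha : 0 < a) (hSR : S < R) :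
    subj T R P S a b D C < subj T R P S a b C C ↔ (T - R) / (R - S) < b / a := by
  rw [div_lt_div_iff₀ (sub_pos.2 hSR) ha]
  simp only [subj, payoff]
  constructor <;> intro h <;> linarith

theorem subj_D_D_lt_subj_C_D_iff (ha : 0 < a) (hPT : P < T) :
    subj T R P S a b D D < subj T R P S a b C D ↔ (P - S) / (T - P) < b / a := by
  rw [div_lt_div_iff₀ (sub_pos.2 hPT) ha]
  simp only [subj, payoff]
  constructor <;> intro h <;> linarith

theorem strictlyDominant_D_of_lt_min (ha : 0 < a) (hSR : S < R) (hPT : P < T)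
    (hw : b / a < min ((T - R) / (R - S)) ((P - S) / (T - P))) :
    StrictlyDominant (subj T R P S a b) D := by
  rintro (_ | _) (_ | _) hs
  · exact (subj_C_C_lt_subj_D_C_iff ha hSR).2 (hw.trans_le (min_le_left _ _))
  · exact (subj_C_D_lt_subj_D_D_iff ha hPT).2 (hw.trans_le (min_le_right _ _))
  · exact absurd rfl hs
  · exact absurd rfl hs

theorem strictlyDominant_C_of_max_lt (ha : 0 < a) (hSR : S < R) (hPT : P < T)
    (hw : max ((T - R) / (R - S)) ((P - S) / (T - P)) < b / a) :
    StrictlyDominant (subj T R P S a b) C := by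
  rintro (_ | _) (_ | _) hs
  · exact absurd rfl hs
  · exact absurd rfl hs
  · exact (subj_D_C_lt_subj_C_C_iff ha hSR).2 ((le_max_left _ _).trans_lt hw)
  · exact (subj_D_D_lt_subj_C_D_iff ha hPT).2 ((le_max_right _ _).trans_lt hw)

end Thresholds

theorem unique_nash_outside_band_general (T R P S a b : ℝ)
    (hTR : T > R) (hRP : R > P) (hPS : P > S)
    (ha : a > 0) :
    (b / a < min ((T - R) / (R - S)) ((P - S) / (T - P)) →
      ∀ s t : Strategy, IsNash T R P S a b s t ↔ (s = Strategy.D ∧ t = Strategy.D)) ∧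
    (b / a > max ((T - R) / (R - S)) ((P - S) / (T - P)) →
      ∀ s t : Strategy, IsNash T R P S a b s t ↔ (s = Strategy.C ∧ t = Strategy.C)) := by
  have hSR : S < R := hPS.trans hRP
  have hPT : P < T := hRP.trans hTR
  exact ⟨fun hw => isNash_iff_of_strictlyDominant (strictlyDominant_D_of_lt_min ha hSR hPT hw),
    fun hw => isNash_iff_of_strictlyDominant (strictlyDominant_C_of_max_lt ha hSR hPT hw)⟩

/-- with `w = b/a`, if `w < min{w_min, w_max}` then (D,D) is the
unique pure-strategy Nash equilibrium of the subjective game, and if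
`w > max{w_min, w_max}` then (C,C) is the unique one, where
`w_min = (T−R)/(R−S)` and `w_max = (P−S)/(T−P)`. -/
theorem unique_nash_outside_band (T R P S a b : ℝ)
    (hTR : T > R) (hRP : R > P) (hPS : P > S)
    (ha : a > 0) (hb : b ≥ 0) :
    (b / a < min ((T - R) / (R - S)) ((P - S) / (T - P)) →
      ∀ s t : Strategy, IsNash T R P S a b s t ↔ (s = Strategy.D ∧ t = Strategy.D)) ∧
    (b / a > max ((T - R) / (R - S)) ((P - S) / (T - P)) →
      ∀ s t : Strategy, IsNash T R P S a b s t ↔ (s = Strategy.C ∧ t = Strategy.C)) :=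
  unique_nash_outside_band_general T R P S a b hTR hRP hPS ha
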